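/- arXiv:1411.1047 — 5 statements merged into one kernel-verified Lean document; each statement's English description precedes it below -/
import Mathlib

section
/- Let p be a prime, s ∈ {0,1,...,p-1}, α a natural number, and B ∈ {1,2,...,p-s-1}. Then for all positive integers A and n, the binomial coefficient C(s + p·α, p^A·n - B) is divisible by p^A. -/
/-!
For `1 ≤ i ≤ A`, the residue of `k = p ^ A * n - B` modulo `p ^ i` is `p ^ i - B`, while the
residue of `m = s + p * α` modulo `p ^ i` is at most `p ^ i - p + s < p ^ i - B`. So adding `k` and
`m - k` in base `p` carries out of each of the `A` lowest positions, and Kummer's theorem gives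
`p ^ A ∣ m.choose k`.
-/

namespace Nat

theorem sub_mod_eq_sub_of_dvd {q N B : ℕ} (hqN : q ∣ N) (hN : 0 < N) (hB : 0 < B) (hBq : B ≤ q) :
    (N - B) % q = q - B := by
  obtain ⟨t, rfl⟩ := hqN
  obtain ⟨t, rfl⟩ : ∃ t', t = t' + 1 := exists_eq_add_one.mpr (Nat.pos_of_mul_pos_left hN)
  have hsplit : q * (t + 1) - B = q * t + (q - B) := by rw [Nat.mul_succ]; omega
  rw [hsplit, Nat.mul_add_mod, Nat.mod_eq_of_lt (by omega)]

theorem mod_add_le_add_mod_of_dvd {m p q : ℕ} (hpq : p ∣ q) (hq : 0 < q) :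
    m % q + p ≤ q + m % p := by
  have hmod : m % q % p = m % p := Nat.mod_mod_of_dvd m hpq
  obtain ⟨c, rfl⟩ := hpq
  have hlt : m % (p * c) / p < c := Nat.div_lt_of_lt_mul (Nat.mod_lt m hq)
  have hle : p * (m % (p * c) / p + 1) ≤ p * c := Nat.mul_le_mul_left p hlt
  have hdecomp := Nat.div_add_mod (m % (p * c)) p
  rw [Nat.mul_succ] at hle
  omega

/-- A carry occurs at position `q` when `k` and `m - k` are added. -/
theorem le_mod_add_mod_sub_of_mod_lt_mod {m k q : ℕ} (hkm : k ≤ m) (hlt : m % q < k % q) :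
    q ≤ k % q + (m - k) % q := by
  by_contra! hcon
  have hsum : (k % q + (m - k) % q) % q = m % q := by
    rw [← Nat.add_mod, Nat.add_sub_cancel' hkm]
  rw [Nat.mod_eq_of_lt hcon] at hsum
  omega

theorem pow_dvd_choose_of_forall_mod_lt_mod {p m k A : ℕ} (hp : p.Prime)
    (h : ∀ i ∈ Finset.Icc 1 A, m % p ^ i < k % p ^ i) : p ^ A ∣ m.choose k := by
  have : Fact p.Prime := ⟨hp⟩
  rcases lt_or_ge m k with hmk | hkm
  · simp [Nat.choose_eq_zero_of_lt hmk]
  have hcarries : Finset.Icc 1 A ⊆ {i ∈ Finset.Ico 1 (A + log p m + 1) |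
      p ^ i ≤ k % p ^ i + (m - k) % p ^ i} := by
    intro i hi
    have hi' := Finset.mem_Icc.mp hi
    exact Finset.mem_filter.mpr
      ⟨Finset.mem_Ico.mpr ⟨hi'.1, by omega⟩, le_mod_add_mod_sub_of_mod_lt_mod hkm (h i hi)⟩
  have hval : A ≤ padicValNat p (m.choose k) := by
    rw [padicValNat_choose hkm (by omega : log p m < A + log p m + 1)]
    simpa using Finset.card_le_card hcarries
  exact (pow_dvd_pow p hval).trans pow_padicValNat_dvd

end Nat

theorem binom_congruence_part1_general (p : ℕ) (hp : p.Prime) (s : ℕ) (α : ℕ)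
    (B : ℕ) (hB1 : 1 ≤ B) (hB2 : B ≤ p - s - 1) :
    ∀ A n : ℕ, 1 ≤ A → 1 ≤ n →
      (p ^ A : ℕ) ∣ Nat.choose (s + p * α) (p ^ A * n - B) := by
  intro A n _ hn
  refine Nat.pow_dvd_choose_of_forall_mod_lt_mod hp fun i hi => ?_
  obtain ⟨hi1, hiA⟩ := Finset.mem_Icc.mp hi
  have hpi : p ≤ p ^ i := Nat.le_self_pow (by omega) p
  have hk : (p ^ A * n - B) % p ^ i = p ^ i - B :=
    Nat.sub_mod_eq_sub_of_dvd (Dvd.dvd.mul_right (pow_dvd_pow p hiA) n)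
      (Nat.mul_pos (pow_pos hp.pos A) hn) hB1 (by omega)
  have hm : (s + p * α) % p ^ i + p ≤ p ^ i + (s + p * α) % p :=
    Nat.mod_add_le_add_mod_of_dvd (dvd_pow_self p (by omega)) (pow_pos hp.pos i)
  have hs : (s + p * α) % p ≤ s := by
    rw [Nat.add_mul_mod_self_left]
    exact Nat.mod_le s p
  omega

theorem binom_congruence_part1 (p : ℕ) (hp : p.Prime) (s : ℕ) (hs : s < p) (α : ℕ)
    (B : ℕ) (hB1 : 1 ≤ B) (hB2 : B ≤ p - s - 1) :
    ∀ A n : ℕ, 1 ≤ A → 1 ≤ n →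
      (p ^ A : ℕ) ∣ Nat.choose (s + p * α) (p ^ A * n - B) :=
  binom_congruence_part1_general p hp s α B hB1 hB2
end

section
/- Let p be a prime, s ∈ {0,1,...,p-1}, α a natural number with α ≢ -1 (mod p), and B ∈ {1,2,...,p-1}. Then for all positive integers A and n, the binomial coefficient C(s + p·α, p^A·n - B) is divisible by p^(A-1). -/
/-!
By Kummer's theorem the exponent of `p` in `C(r + k, k)` counts the positions `i ≥ 1` with
`p ^ i ≤ k % p ^ i + r % p ^ i` (carries). Take `k = p ^ A * n - B`, `r + k = s + p * α`.
For `1 ≤ i ≤ A` we have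
`k % p ^ i = p ^ i - B`, so position `i` carries as soon as `B ≤ r % p ^ i`, a condition that is
monotone in `i`. It holds at `i = 2`: otherwise `(r + k) % p ^ 2 ≥ p ^ 2 - B > p ^ 2 - p`, i.e.
the second base-`p` digit `α % p` of `s + p * α` would be `p - 1`. The carries at
`i = 2, …, A` give `p ^ (A - 1)`.
-/

open Nat Finset

namespace Nat

theorem pow_card_dvd_choose_of_carries {p n k : ℕ} (hp : p.Prime) (S : Finset ℕ)
    (hS : ∀ i ∈ S, p ^ i ≤ k % p ^ i + n % p ^ i) : p ^ #S ∣ choose (n + k) k := by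
  have hsub : S ⊆ {i ∈ Ico 1 (log p (n + k) + 1) | p ^ i ≤ k % p ^ i + n % p ^ i} := by
    intro i hi
    have hcarry := hS i hi
    have hi0 : i ≠ 0 := by rintro rfl; simp [Nat.mod_one] at hcarry
    have hle : p ^ i ≤ n + k := by
      have := mod_le k (p ^ i)
      have := mod_le n (p ^ i)
      omega
    have := le_log_of_pow_le hp.one_lt hle
    simp only [mem_filter, mem_Ico]
    exact ⟨⟨by omega, by omega⟩, hcarry⟩
  rw [hp.pow_dvd_iff_le_factorization (choose_pos (le_add_left k n)).ne',
    factorization_choose' hp (lt_succ_self _)]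
  exact card_le_card hsub

theorem sub_mod_of_dvd {d N B : ℕ} (hd : d ∣ N) (hN : 0 < N) (hB0 : 0 < B) (hB : B ≤ d) :
    (N - B) % d = d - B := by
  obtain ⟨q, rfl⟩ := hd
  have hq : 1 ≤ q := Nat.pos_of_ne_zero (by rintro rfl; simp at hN)
  have hsplit : d * q - B = d * (q - 1) + (d - B) := by
    rw [Nat.mul_sub, mul_one]
    have := Nat.le_mul_of_pos_right d hq
    omega
  rw [hsplit, mul_add_mod, mod_eq_of_lt (by omega)]

theorem mod_le_mod_of_dvd (n : ℕ) {a b : ℕ} (h : a ∣ b) : n % a ≤ n % b :=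
  mod_mod_of_dvd n h ▸ mod_le _ _

theorem le_mod_of_add_mod_lt {d k r B : ℕ} (hk : k % d + B = d) (h : (r + k) % d < d - B) :
    B ≤ r % d := by
  by_contra! hr
  rw [add_mod, mod_eq_of_lt (by omega)] at h
  omega

theorem add_mul_mod_sq_lt {p s α : ℕ} (hs : s < p) (hα : (α : ZMod p) ≠ -1) :
    (s + p * α) % p ^ 2 < p ^ 2 - p := by
  have hdigit : α % p + 2 ≤ p := by
    by_contra! h
    have hα1 : α % p + 1 = p := by have := mod_lt α (show 0 < p by omega); omega
    apply hα
    rw [← ZMod.natCast_mod, eq_neg_iff_add_eq_zero]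
    exact_mod_cast (congrArg (Nat.cast : ℕ → ZMod p) hα1).trans (ZMod.natCast_self p)
  have hmod : (s + p * α) % p ^ 2 = s + p * (α % p) := by
    rw [mod_pow_succ, pow_one, add_mul_mod_self_left, mod_eq_of_lt hs,
      add_mul_div_left _ _ (by omega), div_eq_of_lt hs, zero_add]
  rw [hmod, Nat.lt_sub_iff_add_lt]
  nlinarith

end Nat

theorem binom_congruence_part2 (p : ℕ) (hp : p.Prime) (s : ℕ) (hs : s < p) (α : ℕ)
    (hα : (α : ZMod p) ≠ -1)
    (B : ℕ) (hB1 : 1 ≤ B) (hB2 : B ≤ p - 1) :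
    ∀ A n : ℕ, 1 ≤ A → 1 ≤ n →
      (p ^ (A - 1) : ℕ) ∣ Nat.choose (s + p * α) (p ^ A * n - B) := by
  intro A n hA hn
  set k := p ^ A * n - B
  rcases lt_or_ge (s + p * α) k with hlt | hkm
  · simp [choose_eq_zero_of_lt hlt]
  obtain ⟨r, hr⟩ : ∃ r, s + p * α = r + k := ⟨_, (Nat.sub_add_cancel hkm).symm⟩
  have hk : ∀ i, 1 ≤ i → i ≤ A → k % p ^ i + B = p ^ i := by
    intro i hi hiA
    have hBi : B ≤ p ^ i := (by omega : B ≤ p).trans (le_self_pow₀ hp.one_lt.le (by omega))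
    rw [sub_mod_of_dvd ((pow_dvd_pow p hiA).mul_right n) (Nat.mul_pos (pow_pos hp.pos A) hn)
      hB1 hBi]
    omega
  have hr2 : 2 ≤ A → B ≤ r % p ^ 2 := fun hA2 =>
    le_mod_of_add_mod_lt (hk 2 (by omega) hA2) (by
      have := add_mul_mod_sq_lt hs hα
      rw [← hr]
      omega)
  suffices hcarry : ∀ i ∈ Icc 2 A, p ^ i ≤ k % p ^ i + r % p ^ i by
    simpa [hr, card_Icc, show A + 1 - 2 = A - 1 by omega] using
      pow_card_dvd_choose_of_carries hp (Icc 2 A) hcarry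
  intro i hi
  rw [mem_Icc] at hi
  have := hk i (by omega) hi.2
  have := hr2 (hi.1.trans hi.2)
  have := mod_le_mod_of_dvd r (pow_dvd_pow p hi.1)
  omega
end

section
/- Let m ≥ 1 and 0 ≤ α ≤ m-2 be integers, x = 2m+1, y = α+1, and χ = χ_{8m+4}^{(α)} the periodic function mod 4x equal to ψ_{x-2y} - ψ_{x+2y} - ψ_{3x-2y} + ψ_{3x+2y} (indicator functions of residue classes mod 4x). Then χ is a good function: there exist integers C₁, C₂ coprime to 4x with (x-2y)·C₁ ≡ x+2y (mod 4x) and (3x-2y)·C₂ ≡ 3x+2y (mod 4x). -/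
/-! The single multiplier `2x - 1` works for both pairs: it is a unit modulo `4x`, since
`(2x - 1)(2x + 1) = 4x² - 1`, and for odd `a` it sends `a` to `2x - a`, because
`a(2x - 1) - (2x - a) = 2x(a - 1)` and `a - 1` is even. With `x` odd, `2x - (x - 2y) = x + 2y`
and `2x - (3x - 2y) = (3x + 2y) - 4x`. -/

namespace Int

theorem isCoprime_two_mul_sub_one_four_mul (x : ℤ) : IsCoprime (2 * x - 1) (4 * x) :=
  ⟨-(2 * x + 1), x, by ring⟩

theorem mul_two_mul_sub_one_modEq_of_odd {a : ℤ} (x : ℤ) (ha : Odd a) :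
    a * (2 * x - 1) ≡ 2 * x - a [ZMOD 4 * x] := by
  obtain ⟨k, rfl⟩ := ha
  exact (Int.modEq_iff_dvd.mpr ⟨k, by ring⟩).symm

end Int

theorem chi_is_good_general (m : ℕ)
    (x y : ℤ) (hx : x = 2 * m + 1) :
    ∃ C₁ C₂ : ℤ, IsCoprime C₁ (4 * x) ∧ IsCoprime C₂ (4 * x) ∧
      (x - 2 * y) * C₁ ≡ x + 2 * y [ZMOD 4 * x] ∧
      (3 * x - 2 * y) * C₂ ≡ 3 * x + 2 * y [ZMOD 4 * x] := by
  have hx_odd : Odd x := ⟨m, hx⟩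
  have h₁ : Odd (x - 2 * y) := hx_odd.sub_even (even_two_mul y)
  have h₂ : Odd (3 * x - 2 * y) :=
    (Int.odd_mul.mpr ⟨by decide, hx_odd⟩).sub_even (even_two_mul y)
  refine ⟨2 * x - 1, 2 * x - 1, Int.isCoprime_two_mul_sub_one_four_mul x,
    Int.isCoprime_two_mul_sub_one_four_mul x, ?_, ?_⟩
  · convert Int.mul_two_mul_sub_one_modEq_of_odd x h₁ using 2
    ring
  · calc (3 * x - 2 * y) * (2 * x - 1) ≡ 2 * x - (3 * x - 2 * y) [ZMOD 4 * x] :=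
          Int.mul_two_mul_sub_one_modEq_of_odd x h₂
      _ = 3 * x + 2 * y + 4 * x * (-1) := by ring
      _ ≡ 3 * x + 2 * y [ZMOD 4 * x] := Int.modEq_add_fac_self

/-- `χ_{8m+4}^{(α)}` is a good function: there exist multipliers coprime to `4x`
carrying `x - 2y` to `x + 2y` and `3x - 2y` to `3x + 2y` modulo `4x`. -/
theorem chi_is_good (m α : ℕ) (hm : 1 ≤ m) (hα : α + 2 ≤ m)
    (x y : ℤ) (hx : x = 2 * m + 1) (hy : y = α + 1) :
    ∃ C₁ C₂ : ℤ, IsCoprime C₁ (4 * x) ∧ IsCoprime C₂ (4 * x) ∧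
      (x - 2 * y) * C₁ ≡ x + 2 * y [ZMOD 4 * x] ∧
      (3 * x - 2 * y) * C₂ ≡ 3 * x + 2 * y [ZMOD 4 * x] :=
  chi_is_good_general m x y hx
end

section
/- Let p be a prime, A a positive integer, and y an integer. Let s be the residue of y mod p with 0 ≤ s < p, and fix positive integers n and B with B < p, and set k = p^A·n - B and C = the p-adic valuation of k!. If α is any natural number with y ≡ s + p·α (mod p^(A+C)), then C(y, k) ≡ C(s + p·α, k) (mod p^A), where C(y,k) denotes the generalized binomial coefficient y(y-1)···(y-k+1)/k!. -/
/-!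
Since `k! * C(w, k) = w (w - 1) ⋯ (w - k + 1)` is a polynomial in `w` with integer coefficients,
`y ≡ z (mod p ^ (A + C))` gives `k! * C(y, k) ≡ k! * C(z, k) (mod p ^ (A + C))`. Writing
`k! = p ^ C * m` with `p ∤ m`, the factor `p ^ C` cancels and `m` is invertible modulo `p ^ A`.
-/

open Nat

theorem Int.factorial_mul_choose_eq_descPochhammer_eval (w : ℤ) (k : ℕ) :
    (k ! : ℤ) * Ring.choose w k = (descPochhammer ℤ k).eval w := by
  rw [Polynomial.eval_eq_smeval, Ring.descPochhammer_eq_factorial_smul_choose, nsmul_eq_mul]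

theorem Int.ModEq.factorial_mul_choose {m y z : ℤ} (h : y ≡ z [ZMOD m]) (k : ℕ) :
    (k ! : ℤ) * Ring.choose y k ≡ k ! * Ring.choose z k [ZMOD m] := by
  simp only [Int.factorial_mul_choose_eq_descPochhammer_eval]
  exact Int.modEq_iff_dvd.mpr ((Int.modEq_iff_dvd.mp h).trans (Polynomial.sub_dvd_eval_sub _ _ _))

theorem Int.pow_dvd_of_pow_add_padicValNat_dvd_mul {p N A : ℕ} (hp : p.Prime) (hN : N ≠ 0)
    {d : ℤ} (h : (p : ℤ) ^ (A + padicValNat p N) ∣ N * d) : (p : ℤ) ^ A ∣ d := by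
  have hN_split : (N : ℤ) = p ^ padicValNat p N * (ordCompl[p] N : ℕ) := by
    rw [← Nat.factorization_def N hp]
    exact_mod_cast (Nat.ordProj_mul_ordCompl_eq_self N p).symm
  rw [hN_split, pow_add, mul_comm ((p : ℤ) ^ A), mul_assoc] at h
  have hdvd := (mul_dvd_mul_iff_left (pow_ne_zero _ (by exact_mod_cast hp.ne_zero))).mp h
  have hcop : IsCoprime ((p : ℤ) ^ A) (ordCompl[p] N : ℕ) :=
    (Nat.isCoprime_iff_coprime.mpr (Nat.coprime_ordCompl hp hN)).pow_left
  exact hcop.dvd_of_dvd_mul_left hdvd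

theorem Int.ModEq.choose_of_add_padicValNat_factorial {p A k : ℕ} (hp : p.Prime) {y z : ℤ}
    (h : y ≡ z [ZMOD (p : ℤ) ^ (A + padicValNat p k !)]) :
    Ring.choose y k ≡ Ring.choose z k [ZMOD (p : ℤ) ^ A] := by
  have hfac := Int.modEq_iff_dvd.mp (h.factorial_mul_choose k)
  rw [← mul_sub] at hfac
  exact Int.modEq_iff_dvd.mpr
    (Int.pow_dvd_of_pow_add_padicValNat_dvd_mul hp (factorial_ne_zero k) hfac)

theorem generalized_binom_congruence_general (p : ℕ) (hp : p.Prime) (A : ℕ)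
    (y : ℤ) (s : ℕ)
    (k : ℕ)
    (C : ℕ) (hC : C = padicValNat p (Nat.factorial k))
    (α : ℕ) (hα : y ≡ (s : ℤ) + p * α [ZMOD (p : ℤ) ^ (A + C)]) :
    Ring.choose y k ≡ Ring.choose ((s : ℤ) + p * α) k [ZMOD (p : ℤ) ^ A] := by
  subst hC
  exact hα.choose_of_add_padicValNat_factorial hp

/-- Congruence between generalized binomial coefficients at `p`-adically close arguments. -/
theorem generalized_binom_congruence (p : ℕ) (hp : p.Prime) (A : ℕ) (hA : 1 ≤ A)
    (y : ℤ) (s : ℕ) (hs : (s : ℤ) = y % p)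
    (n B : ℕ) (hn : 1 ≤ n) (hB : 1 ≤ B) (hBp : B < p)
    (k : ℕ) (hk : k = p ^ A * n - B)
    (C : ℕ) (hC : C = padicValNat p (Nat.factorial k))
    (α : ℕ) (hα : y ≡ (s : ℤ) + p * α [ZMOD (p : ℤ) ^ (A + C)]) :
    Ring.choose y k ≡ Ring.choose ((s : ℤ) + p * α) k [ZMOD (p : ℤ) ^ A] :=
  generalized_binom_congruence_general p hp A y s k C hC α hα
end

section
/- Let M be a positive integer, χ: ℤ → ℤ a function of period M with mean value zero (Σ_{a=0}^{M-1} χ(a) = 0), and for each k ≥ 0 define the generalized Bernoulli number B_{k,χ} by the generating function Σ_{a=0}^{M-1} χ(a) · t·e^{at}/(e^{Mt}-1) = Σ_{k≥0} B_{k,χ} t^k/k!. Then for each prime p not dividing M and each k ≥ 0, B_{k,χ} is the p-adic limit as n → ∞ of (1/(M·p^n)) · Σ_{a=0}^{M·p^n - 1} χ(a)·a^k. -/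
/-!
Since `χ` has period `M`, for every multiple `N = M q` the generating function of the sums
`∑_{a<N} χ(a) e^{a t}` is the one defining `B_{k,χ}` times the geometric sum
`∑_{j<q} e^{M j t}`, which gives Faulhaber's formula
`(1/N) ∑_{a<N} χ(a) a^k = (1/(k+1)) ∑_{i≤k} C(k+1,i) B_{i,χ} N^{k-i}`.
The right side is a polynomial in `N` with constant term `B_{k,χ}`, and `N = M p^n → 0`
`p`-adically.
-/

open Finset PowerSeries
open scoped Nat

theorem sum_range_mul_eq_sum_sum {β : Type*} [AddCommMonoid β] (f : ℕ → β) (M q : ℕ) :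
    ∑ a ∈ range (M * q), f a = ∑ j ∈ range q, ∑ b ∈ range M, f (M * j + b) := by
  induction q with
  | zero => simp
  | succ q ih => rw [Nat.mul_succ, sum_range_add, ih, sum_range_succ]

theorem sum_range_succ_mul_zero_pow {R : Type*} [Semiring R] (c : ℕ → R) (k : ℕ) :
    ∑ i ∈ range (k + 1), c i * 0 ^ (k - i) = c k := by
  rw [sum_range_succ, sum_eq_zero fun i hi => by rw [zero_pow (by grind), mul_zero],
    Nat.sub_self, pow_zero, mul_one, zero_add]

theorem PowerSeries.rescale_exp_pow {A : Type*} [CommRing A] [Algebra ℚ A] (a : A) (j : ℕ) :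
    rescale a (exp A) ^ j = rescale (a * j) (exp A) := by
  rw [← map_pow, exp_pow_eq_rescale_exp, rescale_rescale, mul_comm]

section WeightedPowerSums

variable {w : ℕ → ℚ} {M N : ℕ}

theorem sum_smul_rescale_exp_of_periodic (hw : Function.Periodic w M) (q : ℕ) :
    ∑ a ∈ range (M * q), w a • rescale (a : ℚ) (exp ℚ) =
      (∑ b ∈ range M, w b • rescale (b : ℚ) (exp ℚ)) *
        ∑ j ∈ range q, rescale (M : ℚ) (exp ℚ) ^ j := by
  rw [sum_range_mul_eq_sum_sum, mul_sum]
  refine sum_congr rfl fun j _ => ?_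
  rw [sum_mul]
  refine sum_congr rfl fun b _ => ?_
  have hwb : w (M * j + b) = w b := by
    rw [add_comm, mul_comm]; exact hw.nat_mul j b
  rw [hwb, smul_mul_assoc, rescale_exp_pow, exp_mul_exp_eq_exp_add]
  push_cast
  ring_nf

theorem X_mul_sum_smul_rescale_exp (hw : Function.Periodic w M) {F : ℚ⟦X⟧}
    (hF : (rescale (M : ℚ) (exp ℚ) - 1) * F =
      ∑ a ∈ range M, w a • (X * rescale (a : ℚ) (exp ℚ))) (q : ℕ) :
    X * ∑ a ∈ range (M * q), w a • rescale (a : ℚ) (exp ℚ) =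
      (rescale ((M * q : ℕ) : ℚ) (exp ℚ) - 1) * F := by
  have hX : X * ∑ b ∈ range M, w b • rescale (b : ℚ) (exp ℚ) =
      (rescale (M : ℚ) (exp ℚ) - 1) * F := by
    rw [hF, mul_sum]
    exact sum_congr rfl fun b _ => mul_smul_comm _ _ _
  rw [sum_smul_rescale_exp_of_periodic hw, ← mul_assoc, hX, mul_right_comm, mul_geom_sum,
    rescale_exp_pow, Nat.cast_mul]

theorem sum_mul_pow_div_factorial_eq {B : ℕ → ℚ}
    (h : X * ∑ a ∈ range N, w a • rescale (a : ℚ) (exp ℚ) =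
      (rescale (N : ℚ) (exp ℚ) - 1) * PowerSeries.mk fun i => B i / i !) (k : ℕ) :
    ∑ a ∈ range N, w a * a ^ k / k ! =
      ∑ i ∈ range (k + 1), B i / i ! * (N ^ (k + 1 - i) / (k + 1 - i)!) := by
  have hk := congrArg (coeff (k + 1)) h
  rw [coeff_succ_X_mul, map_sum, mul_comm, coeff_mul,
    Finset.Nat.sum_antidiagonal_eq_sum_range_succ_mk, sum_range_succ] at hk
  simp only [map_smul, coeff_rescale, coeff_exp, coeff_mk, map_sub, coeff_one, smul_eq_mul,
    Algebra.algebraMap_self, RingHom.id_apply, Nat.sub_self] at hk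
  rw [if_pos trivial, pow_zero, Nat.factorial_zero, Nat.cast_one, div_one, mul_one, sub_self,
    mul_zero, add_zero] at hk
  convert hk using 1
  · simp only [mul_one_div, mul_div_assoc]
  · refine sum_congr rfl fun i hi => ?_
    rw [if_neg (by grind), sub_zero, mul_one_div]

theorem average_sum_mul_pow_eq (hN : N ≠ 0) {B : ℕ → ℚ}
    (h : X * ∑ a ∈ range N, w a • rescale (a : ℚ) (exp ℚ) =
      (rescale (N : ℚ) (exp ℚ) - 1) * PowerSeries.mk fun i => B i / i !) (k : ℕ) :
    1 / (N : ℚ) * ∑ a ∈ range N, w a * a ^ k =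
      ∑ i ∈ range (k + 1), (k + 1).choose i / (k + 1 : ℚ) * B i * N ^ (k - i) := by
  calc 1 / (N : ℚ) * ∑ a ∈ range N, w a * a ^ k
      = k ! / N * ∑ a ∈ range N, w a * a ^ k / k ! := by
        rw [← sum_div]; field_simp
    _ = k ! / N * ∑ i ∈ range (k + 1), B i / i ! * (N ^ (k + 1 - i) / (k + 1 - i)!) := by
        rw [sum_mul_pow_div_factorial_eq h]
    _ = _ := by
        rw [mul_sum]
        refine sum_congr rfl fun i hi => ?_
        obtain ⟨j, rfl⟩ : ∃ j, k = i + j := ⟨k - i, by grind⟩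
        rw [Nat.cast_choose ℚ (by omega), show i + j + 1 - i = j + 1 by omega,
          show i + j - i = j by omega, Nat.factorial_succ (i + j), Nat.factorial_succ j]
        push_cast
        field_simp
        ring

end WeightedPowerSums

theorem bernoulli_chi_padic_limit_general (M : ℕ) (hM : 0 < M)
    (χ : ℤ → ℤ) (hper : ∀ n : ℤ, χ (n + M) = χ n)
    (B : ℕ → ℚ)
    (hB : (PowerSeries.rescale (M : ℚ) (PowerSeries.exp ℚ) - 1) *
        PowerSeries.mk (fun k => B k / (Nat.factorial k : ℚ)) =
      ∑ a ∈ Finset.range M, (χ a : ℚ) •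
        (PowerSeries.X * PowerSeries.rescale (a : ℚ) (PowerSeries.exp ℚ)))
    (p : ℕ) [Fact p.Prime] (k : ℕ) :
    Filter.Tendsto
      (fun n : ℕ => ((((1 : ℚ) / (M * p ^ n)) *
        ∑ a ∈ Finset.range (M * p ^ n), (χ a : ℚ) * (a : ℚ) ^ k : ℚ) : ℚ_[p]))
      Filter.atTop (nhds ((B k : ℚ) : ℚ_[p])) := by
  set c : ℕ → ℚ := fun i => (k + 1).choose i / (k + 1 : ℚ) * B i
  have hw : Function.Periodic (fun a : ℕ => (χ a : ℚ)) M := fun a => by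
    simpa using congrArg ((↑) : ℤ → ℚ) (hper a)
  have hseq (n : ℕ) :
      (1 : ℚ) / (M * p ^ n) * ∑ a ∈ range (M * p ^ n), (χ a : ℚ) * (a : ℚ) ^ k =
        ∑ i ∈ range (k + 1), c i * ((M * p ^ n : ℕ) : ℚ) ^ (k - i) := by
    have hN : M * p ^ n ≠ 0 := (Nat.mul_pos hM (pow_pos (Fact.out : p.Prime).pos n)).ne'
    simpa using average_sum_mul_pow_eq hN (X_mul_sum_smul_rescale_exp hw hB (p ^ n)) k
  have hN_lim :
      Filter.Tendsto (fun n : ℕ => ((M * p ^ n : ℕ) : ℚ_[p])) Filter.atTop (nhds 0) := by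
    simpa using
      (tendsto_pow_atTop_nhds_zero_of_norm_lt_one Padic.norm_p_lt_one).const_mul (M : ℚ_[p])
  have hcont :
      Continuous fun x : ℚ_[p] => ∑ i ∈ range (k + 1), (c i : ℚ_[p]) * x ^ (k - i) := by
    fun_prop
  have hck : c k = B k := by
    simp only [c, Nat.choose_succ_self_right, Nat.cast_add_one]
    field_simp
  have hlim := (hcont.tendsto 0).comp hN_lim
  rw [sum_range_succ_mul_zero_pow, hck] at hlim
  refine hlim.congr fun n => ?_
  rw [Function.comp_apply, hseq]
  push_cast
  rfl

/-- Generalized Bernoulli numbers `B_{k,χ}` are `p`-adic limits of averaged power sums. -/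
theorem bernoulli_chi_padic_limit (M : ℕ) (hM : 0 < M)
    (χ : ℤ → ℤ) (hper : ∀ n : ℤ, χ (n + M) = χ n)
    (hmean : ∑ a ∈ Finset.range M, χ a = 0)
    (B : ℕ → ℚ)
    (hB : (PowerSeries.rescale (M : ℚ) (PowerSeries.exp ℚ) - 1) *
        PowerSeries.mk (fun k => B k / (Nat.factorial k : ℚ)) =
      ∑ a ∈ Finset.range M, (χ a : ℚ) •
        (PowerSeries.X * PowerSeries.rescale (a : ℚ) (PowerSeries.exp ℚ)))
    (p : ℕ) [Fact p.Prime] (hp : ¬ p ∣ M) (k : ℕ) :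
    Filter.Tendsto
      (fun n : ℕ => ((((1 : ℚ) / (M * p ^ n)) *
        ∑ a ∈ Finset.range (M * p ^ n), (χ a : ℚ) * (a : ℚ) ^ k : ℚ) : ℚ_[p]))
      Filter.atTop (nhds ((B k : ℚ) : ℚ_[p])) :=
  bernoulli_chi_padic_limit_general M hM χ hper B hB p k
end
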